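/- arXiv:1611.07086 — 9 statements merged into one kernel-verified Lean document; each statement's English description precedes it below -/
import Mathlib

section
/- Let A > 0, A ≠ 1, d ≠ 0, and let c, ε, β, μ, K, a₀, a₁, a₂ be real constants satisfying the algebraic system: −6cμa₂(ln A)² + (β/2)a₂² = 0; −2cμa₁(ln A)² + βa₁a₂ + 10cμa₂(ln A)² = 0; βa₀a₂ − ca₂ + εa₂ + 3cμa₁(ln A)² − 4cμa₂(ln A)² + (β/2)a₁² = 0; βa₀a₁ + εa₁ − ca₁ − cμa₁(ln A)² = 0; εa₀ + (β/2)a₀² − ca₀ − K = 0. Then the function U(ξ) = a₀ + a₁Q(ξ) + a₂Q(ξ)², with Q(ξ) = 1/(1 + dA^ξ), satisfies the reduced BBM equation −cU + εU + (β/2)U² − cμU″ = K at every ξ with 1 + dA^ξ ≠ 0. -/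
/-- If the coefficients `a₀, a₁, a₂` and `c` satisfy the algebraic system obtained by the
modified Kudryashov method for the BBM equation, then
`U ξ = a₀ + a₁ Q ξ + a₂ (Q ξ)²` with `Q ξ = 1 / (1 + d A^ξ)` satisfies the reduced
(once-integrated traveling-wave) BBM equation `-c U + ε U + (β/2) U² - c μ U'' = K`
at every `ξ` with `1 + d A^ξ ≠ 0`. -/
theorem bbm_kudryashov_solution (A d c ε β μ K a₀ a₁ a₂ : ℝ)
    (hA : 0 < A) (hA1 : A ≠ 1) (hd : d ≠ 0)
    (h1 : -6 * c * μ * a₂ * (Real.log A) ^ 2 + β / 2 * a₂ ^ 2 = 0)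
    (h2 : -2 * c * μ * a₁ * (Real.log A) ^ 2 + β * a₁ * a₂
        + 10 * c * μ * a₂ * (Real.log A) ^ 2 = 0)
    (h3 : β * a₀ * a₂ - c * a₂ + ε * a₂ + 3 * c * μ * a₁ * (Real.log A) ^ 2
        - 4 * c * μ * a₂ * (Real.log A) ^ 2 + β / 2 * a₁ ^ 2 = 0)
    (h4 : β * a₀ * a₁ + ε * a₁ - c * a₁ - c * μ * a₁ * (Real.log A) ^ 2 = 0)
    (h5 : ε * a₀ + β / 2 * a₀ ^ 2 - c * a₀ - K = 0)
    (U : ℝ → ℝ)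
    (hUdef : U = fun ξ : ℝ =>
      a₀ + a₁ * (1 / (1 + d * A ^ ξ)) + a₂ * (1 / (1 + d * A ^ ξ)) ^ 2) :
    ∀ ξ : ℝ, 1 + d * A ^ ξ ≠ 0 →
      -c * U ξ + ε * U ξ + β / 2 * (U ξ) ^ 2 - c * μ * deriv (deriv U) ξ = K := by
  intro ξ hξ
  set L := Real.log A with hL
  set Qf : ℝ → ℝ := fun x => (1 + d * A ^ x)⁻¹ with hQf
  -- derivative of Qf
  have hQ : ∀ x : ℝ, 1 + d * A ^ x ≠ 0 →
      HasDerivAt Qf (L * ((Qf x) ^ 2 - Qf x)) x := by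
    intro x hx
    have hg : HasDerivAt (fun y : ℝ => 1 + d * A ^ y) (d * (A ^ x * L)) x := by
      have := ((Real.hasStrictDerivAt_const_rpow hA x).hasDerivAt.const_mul d).const_add 1
      simpa [mul_assoc] using this
    have h : HasDerivAt Qf _ x := hg.inv hx
    convert h using 1
    simp only [hQf]
    field_simp
    ring
  -- derivative of U on the open set
  set V : ℝ → ℝ := fun x => (a₁ + 2 * a₂ * Qf x) * (L * ((Qf x) ^ 2 - Qf x)) with hV
  have hU' : ∀ x : ℝ, 1 + d * A ^ x ≠ 0 → HasDerivAt U (V x) x := by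
    intro x hx
    have hq := hQ x hx
    have h : HasDerivAt (fun y : ℝ => a₀ + (a₁ * Qf y + a₂ * (Qf y) ^ 2)) _ x :=
      (((hq.const_mul a₁).add ((hq.pow 2).const_mul a₂)).const_add a₀)
    have hfun : U = fun y : ℝ => a₀ + (a₁ * Qf y + a₂ * (Qf y) ^ 2) := by
      rw [hUdef]; funext y; simp [hQf, one_div]; ring
    rw [hfun]
    convert h using 1
    simp [hV]
    ring
  -- the set is open
  have hScont : Continuous (fun x : ℝ => 1 + d * A ^ x) := by
    have : (fun x : ℝ => 1 + d * A ^ x)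
        = fun x : ℝ => 1 + d * Real.exp (Real.log A * x) := by
      funext x; rw [Real.rpow_def_of_pos hA]
    rw [this]; continuity
  have hSopen : IsOpen {x : ℝ | 1 + d * A ^ x ≠ 0} :=
    isOpen_compl_iff.mpr (isClosed_singleton.preimage hScont)
  have hmem : {x : ℝ | 1 + d * A ^ x ≠ 0} ∈ nhds ξ := hSopen.mem_nhds hξ
  have hEq : deriv U =ᶠ[nhds ξ] V :=
    Filter.eventually_of_mem hmem (fun x hx => (hU' x hx).deriv)
  have hq := hQ ξ hξ
  set q := Qf ξ with hqdef
  -- derivative of V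
  have hV' : HasDerivAt V
      ((2 * a₂ * (L * (q ^ 2 - q))) * (L * (q ^ 2 - q))
        + (a₁ + 2 * a₂ * q) * (L * (2 * q * (L * (q ^ 2 - q)) - L * (q ^ 2 - q)))) ξ := by
    have h1' : HasDerivAt (fun x => a₁ + 2 * a₂ * Qf x) (2 * a₂ * (L * (q ^ 2 - q))) ξ :=
      (hq.const_mul (2 * a₂)).const_add a₁
    have h2' : HasDerivAt (fun x => L * ((Qf x) ^ 2 - Qf x))
        (L * (2 * q * (L * (q ^ 2 - q)) - L * (q ^ 2 - q))) ξ := by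
      have : HasDerivAt (fun x => L * ((Qf x) ^ 2 - Qf x)) _ ξ := ((hq.pow 2).sub hq).const_mul L
      convert this using 1
      ring
    exact h1'.mul h2'
  have hdd : deriv (deriv U) ξ
      = (2 * a₂ * (L * (q ^ 2 - q))) * (L * (q ^ 2 - q))
        + (a₁ + 2 * a₂ * q) * (L * (2 * q * (L * (q ^ 2 - q)) - L * (q ^ 2 - q))) := by
    rw [hEq.deriv_eq, hV'.deriv]
  rw [hdd, hUdef]
  simp only [one_div]
  have hq' : (1 + d * A ^ ξ)⁻¹ = q := rfl
  rw [hq']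
  linear_combination h5 + q * h4 + q ^ 2 * h3 + q ^ 3 * h2 + q ^ 4 * h1
end

section
/- Let A > 0, A ≠ 1, d ≠ 0, and let ε, β, μ, K be real constants with β ≠ 0. Set D = −1 + μ²(ln A)⁴ and B = √(−2Kβ + μ²(ln A)⁴ε² + 2μ²(ln A)⁴Kβ), and assume the radicand is nonnegative, D ≠ 0, and B ≠ ε. Define c = (−ε + B)/D, a₀ = (1/β)(−ε + (−ε+B)/D + (−ε+B)μ(ln A)²/D), a₁ = (−12μ(ln A)²/(β(−ε+B)))·(−2ε(−ε+B)/D + ε² + 2Kβ), a₂ = 12(−ε+B)μ(ln A)²/(Dβ). Then U(ξ) = a₀ + a₁Q(ξ) + a₂Q(ξ)², with Q(ξ) = 1/(1 + dA^ξ), satisfies −cU + εU + (β/2)U² − cμU″ = K at every ξ with 1 + dA^ξ ≠ 0. -/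
set_option maxHeartbeats 1000000 in
/-- The first explicit Kudryashov solution of the reduced BBM equation: with
`D = -1 + μ² (log A)⁴`, `B = √(-2Kβ + μ²(log A)⁴ε² + 2μ²(log A)⁴Kβ)`,
`c = (-ε + B)/D` and the coefficients `a₀, a₁, a₂` as stated, the function
`U ξ = a₀ + a₁ Q ξ + a₂ (Q ξ)²` with `Q ξ = 1/(1 + d A^ξ)` satisfies
`-c U + ε U + (β/2) U² - c μ U'' = K` at every `ξ` with `1 + d A^ξ ≠ 0`. -/
theorem bbm_explicit_solution_one (A d ε β μ K B D c a₀ a₁ a₂ : ℝ)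
    (hA : 0 < A) (hA1 : A ≠ 1) (hd : d ≠ 0) (hβ : β ≠ 0)
    (hrad : 0 ≤ -2 * K * β + μ ^ 2 * (Real.log A) ^ 4 * ε ^ 2
        + 2 * μ ^ 2 * (Real.log A) ^ 4 * K * β)
    (hB : B = Real.sqrt (-2 * K * β + μ ^ 2 * (Real.log A) ^ 4 * ε ^ 2
        + 2 * μ ^ 2 * (Real.log A) ^ 4 * K * β))
    (hD : D = -1 + μ ^ 2 * (Real.log A) ^ 4) (hD0 : D ≠ 0) (hBε : B ≠ ε)
    (hc : c = (-ε + B) / D)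
    (ha₀ : a₀ = (1 / β) * (-ε + (-ε + B) / D + (-ε + B) * μ * (Real.log A) ^ 2 / D))
    (ha₁ : a₁ = (-12 * μ * (Real.log A) ^ 2 / (β * (-ε + B)))
        * (-2 * ε * (-ε + B) / D + ε ^ 2 + 2 * K * β))
    (ha₂ : a₂ = 12 * (-ε + B) * μ * (Real.log A) ^ 2 / (D * β))
    (U : ℝ → ℝ)
    (hUdef : U = fun ξ : ℝ =>
      a₀ + a₁ * (1 / (1 + d * A ^ ξ)) + a₂ * (1 / (1 + d * A ^ ξ)) ^ 2) :
    ∀ ξ : ℝ, 1 + d * A ^ ξ ≠ 0 →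
      -c * U ξ + ε * U ξ + β / 2 * (U ξ) ^ 2 - c * μ * deriv (deriv U) ξ = K := by
  set L := Real.log A with hL
  have hB2 : B ^ 2 = -2 * K * β + μ ^ 2 * L ^ 4 * ε ^ 2 + 2 * μ ^ 2 * L ^ 4 * K * β := by
    rw [hB, sq, Real.mul_self_sqrt hrad]
  have hBe : -ε + B ≠ 0 := fun h => hBε (by linarith)
  -- parameter relations
  have h2 : a₂ = 12 * c * (μ * L ^ 2) / β := by
    rw [ha₂, hc]; field_simp
  have h1 : a₁ = -a₂ := by
    rw [hD] at hD0
    rw [ha₁, ha₂, hD]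
    field_simp
    linear_combination (μ * L ^ 2) * hB2
  have h0 : a₀ = (-ε + c + c * (μ * L ^ 2)) / β := by
    rw [ha₀, hc]; field_simp
  have hK : K = (c ^ 2 * μ ^ 2 * L ^ 4 - (c - ε) ^ 2) / (2 * β) := by
    rw [hD] at hD0
    rw [hc, hD]
    field_simp
    linear_combination (1 - μ ^ 2 * L ^ 4) * hB2
  -- derivative of Q
  have hg : ∀ ξ : ℝ, HasDerivAt (fun x : ℝ => A ^ x) (A ^ ξ * L) ξ := fun ξ =>
    (Real.hasStrictDerivAt_const_rpow hA ξ).hasDerivAt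
  have hQ : ∀ ξ : ℝ, 1 + d * A ^ ξ ≠ 0 →
      HasDerivAt (fun x : ℝ => 1 / (1 + d * A ^ x))
        (L * ((1 / (1 + d * A ^ ξ)) ^ 2 - 1 / (1 + d * A ^ ξ))) ξ := by
    intro ξ hf
    have h := (((hg ξ).const_mul d).const_add 1).inv hf
    simp only [one_div]
    refine h.congr_deriv ?_
    field_simp
    ring
  -- first derivative of U
  have hU' : ∀ ξ : ℝ, 1 + d * A ^ ξ ≠ 0 → HasDerivAt U
      (L * (a₁ * ((1 / (1 + d * A ^ ξ)) ^ 2 - 1 / (1 + d * A ^ ξ))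
        + a₂ * (2 * (1 / (1 + d * A ^ ξ)) ^ 3 - 2 * (1 / (1 + d * A ^ ξ)) ^ 2))) ξ := by
    intro ξ hf
    rw [hUdef]
    have hq := hQ ξ hf
    have h := ((hq.const_mul a₁).const_add a₀).add ((hq.pow 2).const_mul a₂)
    refine h.congr_deriv ?_
    ring
  intro ξ hf
  -- the set where the denominator is nonzero is open
  have hcont : Continuous fun x : ℝ => 1 + d * A ^ x := by
    have : Continuous fun x : ℝ => A ^ x :=
      Continuous.rpow continuous_const continuous_id (fun x => Or.inl (ne_of_gt hA))
    exact continuous_const.add (continuous_const.mul this)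
  have hopen : IsOpen {x : ℝ | 1 + d * A ^ x ≠ 0} :=
    isOpen_compl_singleton.preimage hcont
  have hev : ∀ᶠ x in nhds ξ, 1 + d * A ^ x ≠ 0 := hopen.mem_nhds hf
  have hdu : deriv U =ᶠ[nhds ξ] fun x =>
      L * (a₁ * ((1 / (1 + d * A ^ x)) ^ 2 - 1 / (1 + d * A ^ x))
        + a₂ * (2 * (1 / (1 + d * A ^ x)) ^ 3 - 2 * (1 / (1 + d * A ^ x)) ^ 2)) :=
    hev.mono fun x hx => (hU' x hx).deriv
  have hV' : HasDerivAt (fun x : ℝ =>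
      L * (a₁ * ((1 / (1 + d * A ^ x)) ^ 2 - 1 / (1 + d * A ^ x))
        + a₂ * (2 * (1 / (1 + d * A ^ x)) ^ 3 - 2 * (1 / (1 + d * A ^ x)) ^ 2)))
      (L ^ 2 * ((1 / (1 + d * A ^ ξ)) ^ 2 - 1 / (1 + d * A ^ ξ)) *
        (a₁ * (2 * (1 / (1 + d * A ^ ξ)) - 1)
          + a₂ * (6 * (1 / (1 + d * A ^ ξ)) ^ 2 - 4 * (1 / (1 + d * A ^ ξ))))) ξ := by
    have hq := hQ ξ hf
    have h := ((((hq.pow 2).sub hq).const_mul a₁).add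
      ((((hq.pow 3).const_mul 2).sub ((hq.pow 2).const_mul 2)).const_mul a₂)).const_mul L
    refine h.congr_deriv ?_
    ring
  have hW : deriv (deriv U) ξ =
      L ^ 2 * ((1 / (1 + d * A ^ ξ)) ^ 2 - 1 / (1 + d * A ^ ξ)) *
        (a₁ * (2 * (1 / (1 + d * A ^ ξ)) - 1)
          + a₂ * (6 * (1 / (1 + d * A ^ ξ)) ^ 2 - 4 * (1 / (1 + d * A ^ ξ)))) := by
    rw [hdu.deriv_eq]
    exact hV'.deriv
  rw [hW]
  simp only [hUdef]
  rw [h1, h2, h0, hK]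
  generalize (1 / (1 + d * A ^ ξ) : ℝ) = q
  field_simp
  ring
end

section
/- Let A > 0, A ≠ 1, d ≠ 0, and let ε, β, μ, K be real constants with β ≠ 0. Set D = −1 + μ²(ln A)⁴ and B = √(−2Kβ + μ²(ln A)⁴ε² + 2μ²(ln A)⁴Kβ), and assume the radicand is nonnegative, D ≠ 0, and ε + B ≠ 0. Define c = −(ε + B)/D, a₀ = (1/β)(−ε − (ε+B)/D − (ε+B)μ(ln A)²/D), a₁ = (12μ(ln A)²/((ε+B)β))·(2ε(ε+B)/D + ε² + 2Kβ), a₂ = −12(ε+B)μ(ln A)²/(Dβ). Then U(ξ) = a₀ + a₁Q(ξ) + a₂Q(ξ)², with Q(ξ) = 1/(1 + dA^ξ), satisfies −cU + εU + (β/2)U² − cμU″ = K at every ξ with 1 + dA^ξ ≠ 0. -/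
set_option maxHeartbeats 1000000

/-- The second explicit Kudryashov solution of the reduced BBM equation: with
`D = -1 + μ² (log A)⁴`, `B = √(-2Kβ + μ²(log A)⁴ε² + 2μ²(log A)⁴Kβ)`,
`c = -(ε + B)/D` and the coefficients `a₀, a₁, a₂` as stated, the function
`U ξ = a₀ + a₁ Q ξ + a₂ (Q ξ)²` with `Q ξ = 1/(1 + d A^ξ)` satisfies
`-c U + ε U + (β/2) U² - c μ U'' = K` at every `ξ` with `1 + d A^ξ ≠ 0`. -/
theorem bbm_explicit_solution_two (A d ε β μ K B D c a₀ a₁ a₂ : ℝ)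
    (hA : 0 < A) (hA1 : A ≠ 1) (hd : d ≠ 0) (hβ : β ≠ 0)
    (hrad : 0 ≤ -2 * K * β + μ ^ 2 * (Real.log A) ^ 4 * ε ^ 2
        + 2 * μ ^ 2 * (Real.log A) ^ 4 * K * β)
    (hB : B = Real.sqrt (-2 * K * β + μ ^ 2 * (Real.log A) ^ 4 * ε ^ 2
        + 2 * μ ^ 2 * (Real.log A) ^ 4 * K * β))
    (hD : D = -1 + μ ^ 2 * (Real.log A) ^ 4) (hD0 : D ≠ 0) (hBε : ε + B ≠ 0)
    (hc : c = -((ε + B) / D))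
    (ha₀ : a₀ = (1 / β) * (-ε - (ε + B) / D - (ε + B) * μ * (Real.log A) ^ 2 / D))
    (ha₁ : a₁ = (12 * μ * (Real.log A) ^ 2 / ((ε + B) * β))
        * (2 * ε * (ε + B) / D + ε ^ 2 + 2 * K * β))
    (ha₂ : a₂ = -(12 * (ε + B) * μ * (Real.log A) ^ 2 / (D * β)))
    (U : ℝ → ℝ)
    (hUdef : U = fun ξ : ℝ =>
      a₀ + a₁ * (1 / (1 + d * A ^ ξ)) + a₂ * (1 / (1 + d * A ^ ξ)) ^ 2) :
    ∀ ξ : ℝ, 1 + d * A ^ ξ ≠ 0 →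
      -c * U ξ + ε * U ξ + β / 2 * (U ξ) ^ 2 - c * μ * deriv (deriv U) ξ = K := by
  intro ξ hξ
  have hB2 : B ^ 2 = -2 * K * β + μ ^ 2 * (Real.log A) ^ 4 * ε ^ 2
      + 2 * μ ^ 2 * (Real.log A) ^ 4 * K * β := by
    rw [hB]; exact Real.sq_sqrt hrad
  set L := Real.log A with hLdef
  have hg : ∀ x : ℝ, HasDerivAt (fun t : ℝ => 1 + d * A ^ t) (d * A ^ x * L) x := by
    intro x
    have h := (Real.hasStrictDerivAt_const_rpow hA x).hasDerivAt
    have h2 := (h.const_mul d).const_add 1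
    refine h2.congr_deriv ?_
    ring
  set W : ℝ → ℝ := fun x =>
    -(a₁ * ((d * A ^ x * L) / (1 + d * A ^ x) ^ 2))
      - 2 * a₂ * ((d * A ^ x * L) / (1 + d * A ^ x) ^ 3) with hW
  have hU' : ∀ x : ℝ, 1 + d * A ^ x ≠ 0 → HasDerivAt U (W x) x := by
    intro x hx
    have hinv := (hg x).inv hx
    have h1 := ((hinv.const_mul a₁).const_add a₀).add ((hinv.pow 2).const_mul a₂)
    have hUeq : U = fun t : ℝ =>
        a₀ + a₁ * (1 + d * A ^ t)⁻¹ + a₂ * ((1 + d * A ^ t)⁻¹) ^ 2 := by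
      rw [hUdef]; funext t; rw [one_div]
    rw [hUeq]
    refine h1.congr_deriv ?_
    simp only [hW, Pi.inv_apply]
    generalize (1 + d * A ^ x) = g
    push_cast
    ring
  have hcont : Continuous fun x : ℝ => 1 + d * A ^ x := by
    have hAe : (fun x : ℝ => A ^ x) = fun x : ℝ => Real.exp (Real.log A * x) := by
      funext x; rw [Real.rpow_def_of_pos hA]
    have h : Continuous fun x : ℝ => A ^ x := by
      rw [hAe]; exact Real.continuous_exp.comp (continuous_const.mul continuous_id)
    exact continuous_const.add (continuous_const.mul h)
  have hopen : IsOpen {x : ℝ | 1 + d * A ^ x ≠ 0} :=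
    isOpen_compl_singleton.preimage hcont
  have hev : deriv U =ᶠ[nhds ξ] W := by
    filter_upwards [hopen.mem_nhds hξ] with x hx
    exact (hU' x hx).deriv
  have hnum : HasDerivAt (fun t : ℝ => d * A ^ t * L) (d * A ^ ξ * L * L) ξ := by
    have h := (Real.hasStrictDerivAt_const_rpow hA ξ).hasDerivAt
    have h2 := (h.const_mul d).mul_const L
    refine h2.congr_deriv ?_
    ring
  have hdiv1 := hnum.div ((hg ξ).pow 2) (pow_ne_zero 2 hξ)
  have hdiv2 := hnum.div ((hg ξ).pow 3) (pow_ne_zero 3 hξ)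
  have hW0 := ((hdiv1.const_mul a₁).neg).sub (hdiv2.const_mul (2 * a₂))
  have hW' : HasDerivAt W
      ((-(a₁ * ((d * A ^ ξ * L * L * (1 + d * A ^ ξ) ^ 2 -
          d * A ^ ξ * L * ((2 : ℕ) * (1 + d * A ^ ξ) ^ 1 * (d * A ^ ξ * L))) /
            ((1 + d * A ^ ξ) ^ 2) ^ 2))) -
        2 * a₂ * ((d * A ^ ξ * L * L * (1 + d * A ^ ξ) ^ 3 -
          d * A ^ ξ * L * ((3 : ℕ) * (1 + d * A ^ ξ) ^ 2 * (d * A ^ ξ * L))) /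
            ((1 + d * A ^ ξ) ^ 3) ^ 2)) ξ := by
    rw [hW]; exact hW0
  have hd2 : deriv (deriv U) ξ = deriv W ξ := hev.deriv_eq
  set Qv : ℝ := 1 / (1 + d * A ^ ξ) with hQv
  have hd2v : deriv (deriv U) ξ = L ^ 2 *
      (a₁ * (2 * Qv ^ 3 - 3 * Qv ^ 2 + Qv)
        + a₂ * (6 * Qv ^ 4 - 10 * Qv ^ 3 + 4 * Qv ^ 2)) := by
    rw [hd2, hW'.deriv, hQv]
    generalize hy : d * A ^ ξ = y at hξ ⊢
    push_cast
    field_simp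
    ring
  have hUv : U ξ = a₀ + a₁ * Qv + a₂ * Qv ^ 2 := by
    simp only [hUdef, hQv]
  rw [hUv, hd2v]
  subst hD
  have e0 : -c * a₀ + ε * a₀ + β / 2 * a₀ ^ 2 = K := by
    rw [hc, ha₀]
    field_simp
    linear_combination
      ((-1) + (1*μ^2*L^4)) * hB2
  have e1 : -c * a₁ + ε * a₁ + β * (a₀ * a₁) - c * μ * L ^ 2 * a₁ = 0 := by
    rw [hc, ha₀, ha₁]
    field_simp
    ring
  have e2 : -c * a₂ + ε * a₂ + β * (a₀ * a₂ + a₁ ^ 2 / 2)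
      - c * μ * L ^ 2 * (-3 * a₁ + 4 * a₂) = 0 := by
    rw [hc, ha₀, ha₁, ha₂]
    field_simp
    linear_combination
      ((-72*μ^2*B^2*L^4) + (-432*ε^1*μ^2*B^1*L^4) + (-216*ε^2*μ^2*L^4) + (-144*ε^2*μ^4*L^8) + (288*β^1*μ^2*K^1*L^4) + (-288*β^1*μ^4*K^1*L^8)) * hB2
  have e3 : β * (a₁ * a₂) - c * μ * L ^ 2 * (2 * a₁ - 10 * a₂) = 0 := by
    rw [hc, ha₁, ha₂]
    field_simp
    linear_combination
      ((120*μ^2*L^4)) * hB2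
  have e4 : β / 2 * a₂ ^ 2 - c * μ * L ^ 2 * (6 * a₂) = 0 := by
    rw [hc, ha₂]
    field_simp
    ring
  linear_combination e0 + Qv * e1 + Qv ^ 2 * e2 + Qv ^ 3 * e3 + Qv ^ 4 * e4
end

section
/- Let A > 0, A ≠ 1, d ≠ 0, and let c, β, δ, μ be real constants with c ≠ 0 and δ ≠ 0. Define a₀ = (c²μ(ln A)² + β + c²)/(cδ), a₁ = −12cμ(ln A)²/δ, a₂ = 12cμ(ln A)²/δ. Then U(ξ) = a₀ + a₁Q(ξ) + a₂Q(ξ)², with Q(ξ) = 1/(1 + dA^ξ), satisfies the reduced symmetric BBM equation (c² + β)U′ − cδ·U·U′ + c²μ·U‴ = 0 at every ξ with 1 + dA^ξ ≠ 0. -/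
open Polynomial Real Filter

/-- The Kudryashov solution of the reduced symmetric BBM equation: with
`a₀ = (c²μ(log A)² + β + c²)/(cδ)`, `a₁ = -12cμ(log A)²/δ`, `a₂ = 12cμ(log A)²/δ`,
the function `U ξ = a₀ + a₁ Q ξ + a₂ (Q ξ)²` with `Q ξ = 1/(1 + d A^ξ)` satisfies
`(c² + β) U' - c δ U U' + c² μ U''' = 0` at every `ξ` with `1 + d A^ξ ≠ 0`. -/
theorem symmetric_bbm_kudryashov_solution (A d c β δ μ a₀ a₁ a₂ : ℝ)
    (hA : 0 < A) (hA1 : A ≠ 1) (hd : d ≠ 0) (hc : c ≠ 0) (hδ : δ ≠ 0)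
    (ha₀ : a₀ = (c ^ 2 * μ * (Real.log A) ^ 2 + β + c ^ 2) / (c * δ))
    (ha₁ : a₁ = -(12 * c * μ * (Real.log A) ^ 2 / δ))
    (ha₂ : a₂ = 12 * c * μ * (Real.log A) ^ 2 / δ)
    (U : ℝ → ℝ)
    (hUdef : U = fun ξ : ℝ =>
      a₀ + a₁ * (1 / (1 + d * A ^ ξ)) + a₂ * (1 / (1 + d * A ^ ξ)) ^ 2) :
    ∀ ξ : ℝ, 1 + d * A ^ ξ ≠ 0 →
      (c ^ 2 + β) * deriv U ξ - c * δ * (U ξ * deriv U ξ)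
        + c ^ 2 * μ * deriv (deriv (deriv U)) ξ = 0 := by
  set L := Real.log A with hL
  set q : ℝ → ℝ := fun t => 1 / (1 + d * A ^ t) with hqdef
  set r : ℝ[X] := C L * (X ^ 2 - X) with hr
  set p₀ : ℝ[X] := C a₀ + C a₁ * X + C a₂ * X ^ 2 with hp0
  set p₁ : ℝ[X] := p₀.derivative * r with hp1
  set p₂ : ℝ[X] := p₁.derivative * r with hp2
  set p₃ : ℝ[X] := p₂.derivative * r with hp3
  have hScont : Continuous fun t : ℝ => 1 + d * A ^ t := by
    have : Continuous fun t : ℝ => A ^ t :=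
      continuous_iff_continuousAt.2 fun t => continuousAt_const_rpow hA.ne'
    fun_prop
  have hS : IsOpen {t : ℝ | 1 + d * A ^ t ≠ 0} :=
    isOpen_ne.preimage hScont
  -- derivative of q
  have hq : ∀ t : ℝ, 1 + d * A ^ t ≠ 0 → HasDerivAt q (r.eval (q t)) t := by
    intro t ht
    have h1 : HasDerivAt (fun s : ℝ => 1 + d * A ^ s) (d * (A ^ t * L)) t := by
      have := (hasStrictDerivAt_const_rpow hA t).hasDerivAt
      simpa using (this.const_mul d).const_add 1
    have h2 := h1.inv ht
    have hqeq : q = fun s : ℝ => ((1 : ℝ) + d * A ^ s)⁻¹ := by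
      funext s; simp [hqdef, one_div]
    rw [hqeq]
    refine h2.congr_deriv ?_
    have : d * A ^ t = (1 + d * A ^ t) - 1 := by ring
    rw [hr]
    simp only [eval_mul, eval_C, eval_sub, eval_pow, eval_X, hqdef]
    field_simp
    ring
  -- chain rule for polynomials in q
  have key : ∀ (p : ℝ[X]) (t : ℝ), 1 + d * A ^ t ≠ 0 →
      HasDerivAt (fun s : ℝ => p.eval (q s)) ((p.derivative * r).eval (q t)) t := by
    intro p t ht
    have := (p.hasDerivAt (q t)).comp t (hq t ht)
    rw [eval_mul]
    exact this
  have hU : U = fun s => p₀.eval (q s) := by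
    funext s
    simp [hUdef, hp0, hqdef]
  have hd1 : ∀ t : ℝ, 1 + d * A ^ t ≠ 0 → deriv U t = p₁.eval (q t) := by
    intro t ht
    rw [hU]
    exact (key p₀ t ht).deriv
  have hd2 : ∀ t : ℝ, 1 + d * A ^ t ≠ 0 → deriv (deriv U) t = p₂.eval (q t) := by
    intro t ht
    have hev : deriv U =ᶠ[nhds t] fun s => p₁.eval (q s) := by
      filter_upwards [hS.mem_nhds ht] with s hs using hd1 s hs
    rw [hev.deriv_eq]
    exact (key p₁ t ht).deriv
  intro ξ hξ
  have hd3 : deriv (deriv (deriv U)) ξ = p₃.eval (q ξ) := by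
    have hev : deriv (deriv U) =ᶠ[nhds ξ] fun s => p₂.eval (q s) := by
      filter_upwards [hS.mem_nhds hξ] with s hs using hd2 s hs
    rw [hev.deriv_eq]
    exact (key p₂ ξ hξ).deriv
  rw [hd1 ξ hξ, hd3, hU]
  set x := q ξ with hx
  simp only [hp3, hp2, hp1, hp0, hr, derivative_mul, derivative_add, derivative_C,
    derivative_X, derivative_sub, derivative_C_mul, derivative_X_pow, eval_mul, eval_add,
    eval_sub, eval_pow, eval_C, eval_X, eval_natCast, eval_one, eval_zero, derivative_zero,
    derivative_one]
  subst ha₀ ha₁ ha₂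
  field_simp
  ring
end

section
/- Let α ∈ (0,1], A > 0, A ≠ 1, d > 0, and let c, β, δ, μ be real constants with c ≠ 0 and δ ≠ 0. With a₀ = (c²μ(ln A)² + β + c²)/(cδ), a₁ = −12cμ(ln A)²/δ, a₂ = 12cμ(ln A)²/δ, define u₃(x,t) = a₀ + a₁/(1 + dA^{x − c t^α/α}) + a₂/(1 + dA^{x − c t^α/α})². Then for all x ∈ ℝ and t > 0, u₃ satisfies the conformable time-fractional symmetric BBM equation: t^{1−α}∂_t(t^{1−α}∂_t u₃) + β·∂_x² u₃ + δ·u₃·t^{1−α}∂_t(∂_x u₃) + δ·(∂_x u₃)·t^{1−α}∂_t u₃ + μ·t^{1−α}∂_t(t^{1−α}∂_t(∂_x² u₃)) = 0. -/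
theorem bbm_hd_p2 (c0 c1 c2 Y : ℝ) :
    HasDerivAt (fun y : ℝ => c0 + c1 * y + c2 * y ^ 2) (c1 + 2 * c2 * Y) Y := by
  have h := ((hasDerivAt_const Y c0).add ((hasDerivAt_id Y).const_mul c1)).add
    ((hasDerivAt_pow 2 Y).const_mul c2)
  refine h.congr_deriv ?_
  push_cast
  ring

theorem bbm_hd_p3 (c1 c2 c3 Y : ℝ) :
    HasDerivAt (fun y : ℝ => c1 * y + c2 * y ^ 2 + c3 * y ^ 3)
      (c1 + 2 * c2 * Y + 3 * c3 * Y ^ 2) Y := by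
  have h := (((hasDerivAt_id Y).const_mul c1).add ((hasDerivAt_pow 2 Y).const_mul c2)).add
    ((hasDerivAt_pow 3 Y).const_mul c3)
  refine h.congr_deriv ?_
  push_cast
  ring

theorem bbm_hd_p4 (c1 c2 c3 c4 Y : ℝ) :
    HasDerivAt (fun y : ℝ => c1 * y + c2 * y ^ 2 + c3 * y ^ 3 + c4 * y ^ 4)
      (c1 + 2 * c2 * Y + 3 * c3 * Y ^ 2 + 4 * c4 * Y ^ 3) Y := by
  have h := ((((hasDerivAt_id Y).const_mul c1).add ((hasDerivAt_pow 2 Y).const_mul c2)).add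
    ((hasDerivAt_pow 3 Y).const_mul c3)).add ((hasDerivAt_pow 4 Y).const_mul c4)
  refine h.congr_deriv ?_
  push_cast
  ring

theorem bbm_hd_p5 (c1 c2 c3 c4 c5 Y : ℝ) :
    HasDerivAt (fun y : ℝ => c1 * y + c2 * y ^ 2 + c3 * y ^ 3 + c4 * y ^ 4 + c5 * y ^ 5)
      (c1 + 2 * c2 * Y + 3 * c3 * Y ^ 2 + 4 * c4 * Y ^ 3 + 5 * c5 * Y ^ 4) Y := by
  have h := (((((hasDerivAt_id Y).const_mul c1).add ((hasDerivAt_pow 2 Y).const_mul c2)).add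
    ((hasDerivAt_pow 3 Y).const_mul c3)).add ((hasDerivAt_pow 4 Y).const_mul c4)).add
    ((hasDerivAt_pow 5 Y).const_mul c5)
  refine h.congr_deriv ?_
  push_cast
  ring

set_option maxHeartbeats 2000000 in
/-- The explicit solution `u₃` of the conformable time-fractional symmetric BBM equation
`u_{tt}^(2α) + β u_{xx} + δ u u_{xt}^(α) + δ u_x u_t^(α) + μ u_{xxtt}^(2α) = 0`, where the
conformable derivative of order `α` in `t` is `t^(1-α) ∂_t` and the order-`2α` one is the
order-`α` derivative applied twice: with the Kudryashov coefficients
`a₀ = (c²μ(log A)² + β + c²)/(cδ)`, `a₁ = -12cμ(log A)²/δ`, `a₂ = 12cμ(log A)²/δ`,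
the function `u (x, t) = a₀ + a₁/(1 + d A^{x - c t^α/α}) + a₂/(1 + d A^{x - c t^α/α})²`
satisfies the equation for all `x` and all `t > 0`. -/
theorem symmetric_bbm_explicit_solution (α A d c β δ μ a₀ a₁ a₂ : ℝ)
    (hα0 : 0 < α) (hα1 : α ≤ 1)
    (hA : 0 < A) (hA1 : A ≠ 1) (hd : 0 < d) (hc : c ≠ 0) (hδ : δ ≠ 0)
    (ha₀ : a₀ = (c ^ 2 * μ * (Real.log A) ^ 2 + β + c ^ 2) / (c * δ))
    (ha₁ : a₁ = -(12 * c * μ * (Real.log A) ^ 2 / δ))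
    (ha₂ : a₂ = 12 * c * μ * (Real.log A) ^ 2 / δ)
    (u : ℝ → ℝ → ℝ)
    (hu : u = fun x t =>
      a₀ + a₁ / (1 + d * A ^ (x - c * t ^ α / α))
        + a₂ / (1 + d * A ^ (x - c * t ^ α / α)) ^ 2) :
    ∀ x t : ℝ, 0 < t →
      t ^ (1 - α) * deriv (fun s => s ^ (1 - α) * deriv (fun r => u x r) s) t
        + β * deriv (fun y => deriv (fun z => u z t) y) x
        + δ * u x t * (t ^ (1 - α) * deriv (fun s => deriv (fun y => u y s) x) t)
        + δ * deriv (fun y => u y t) x * (t ^ (1 - α) * deriv (fun s => u x s) t)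
        + μ * (t ^ (1 - α) *
            deriv (fun s => s ^ (1 - α) *
              deriv (fun r => deriv (fun y => deriv (fun z => u z r) y) x) s) t) = 0 := by
  intro x t ht
  set L := Real.log A with hL
  have hα : α ≠ 0 := ne_of_gt hα0
  have hpos : ∀ ξ : ℝ, (0:ℝ) < 1 + d * A ^ ξ := by
    intro ξ
    have h1 : (0:ℝ) < A ^ ξ := Real.rpow_pos_of_pos hA ξ
    positivity
  set Yf : ℝ → ℝ := fun ξ => (1 + d * A ^ ξ)⁻¹ with hYf
  -- derivative of Yf
  have hYd : ∀ ξ : ℝ, HasDerivAt Yf (L * ((Yf ξ) ^ 2 - Yf ξ)) ξ := by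
    intro ξ
    have hE : HasDerivAt (fun ξ : ℝ => A ^ ξ) (A ^ ξ * L) ξ :=
      (Real.hasStrictDerivAt_const_rpow hA ξ).hasDerivAt
    have h1 : HasDerivAt (fun ξ : ℝ => 1 + d * A ^ ξ) (d * (A ^ ξ * L)) ξ :=
      (hE.const_mul d).const_add 1
    have h2 := h1.inv (ne_of_gt (hpos ξ))
    have hne := (hpos ξ).ne'
    have he : -(d * (A ^ ξ * L)) / (1 + d * A ^ ξ) ^ 2 = L * ((Yf ξ) ^ 2 - Yf ξ) := by
      simp only [hYf]
      field_simp
      ring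
    exact he ▸ h2
  -- the profile functions
  set U0 : ℝ → ℝ := fun ξ => a₀ + a₁ * Yf ξ + a₂ * (Yf ξ) ^ 2 with hU0
  set U1 : ℝ → ℝ := fun ξ =>
    (-(a₁*L)) * Yf ξ + (a₁*L - 2*a₂*L) * (Yf ξ) ^ 2 + (2*a₂*L) * (Yf ξ) ^ 3 with hU1
  set U2 : ℝ → ℝ := fun ξ =>
    (a₁*L^2) * Yf ξ + (4*a₂*L^2 - 3*a₁*L^2) * (Yf ξ) ^ 2 + (2*a₁*L^2 - 10*a₂*L^2) * (Yf ξ) ^ 3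
      + (6*a₂*L^2) * (Yf ξ) ^ 4 with hU2
  set U3 : ℝ → ℝ := fun ξ =>
    (-(a₁*L^3)) * Yf ξ + (7*a₁*L^3 - 8*a₂*L^3) * (Yf ξ) ^ 2 + (38*a₂*L^3 - 12*a₁*L^3) * (Yf ξ) ^ 3
      + (6*a₁*L^3 - 54*a₂*L^3) * (Yf ξ) ^ 4 + (24*a₂*L^3) * (Yf ξ) ^ 5 with hU3
  set U4 : ℝ → ℝ := fun ξ =>
    (a₁*L^4) * Yf ξ + (16*a₂*L^4 - 15*a₁*L^4) * (Yf ξ) ^ 2 + (50*a₁*L^4 - 130*a₂*L^4) * (Yf ξ) ^ 3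
      + (330*a₂*L^4 - 60*a₁*L^4) * (Yf ξ) ^ 4 + (24*a₁*L^4 - 336*a₂*L^4) * (Yf ξ) ^ 5
      + (120*a₂*L^4) * (Yf ξ) ^ 6 with hU4
  -- chain derivatives
  have hD0 : ∀ ξ : ℝ, HasDerivAt U0 (U1 ξ) ξ := by
    intro ξ
    have h := (bbm_hd_p2 a₀ a₁ a₂ (Yf ξ)).comp ξ (hYd ξ)
    have he : (a₁ + 2 * a₂ * Yf ξ) * (L * ((Yf ξ) ^ 2 - Yf ξ)) = U1 ξ := by
      simp only [hU1]; ring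
    exact he ▸ h
  have hD1 : ∀ ξ : ℝ, HasDerivAt U1 (U2 ξ) ξ := by
    intro ξ
    have h := (bbm_hd_p3 (-(a₁*L)) (a₁*L - 2*a₂*L) (2*a₂*L) (Yf ξ)).comp ξ (hYd ξ)
    have he : (-(a₁*L) + 2 * (a₁*L - 2*a₂*L) * Yf ξ + 3 * (2*a₂*L) * (Yf ξ) ^ 2)
        * (L * ((Yf ξ) ^ 2 - Yf ξ)) = U2 ξ := by
      simp only [hU2]; ring
    exact he ▸ h
  have hD2 : ∀ ξ : ℝ, HasDerivAt U2 (U3 ξ) ξ := by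
    intro ξ
    have h := (bbm_hd_p4 (a₁*L^2) (4*a₂*L^2 - 3*a₁*L^2) (2*a₁*L^2 - 10*a₂*L^2) (6*a₂*L^2)
      (Yf ξ)).comp ξ (hYd ξ)
    have he : (a₁*L^2 + 2 * (4*a₂*L^2 - 3*a₁*L^2) * Yf ξ + 3 * (2*a₁*L^2 - 10*a₂*L^2) * (Yf ξ) ^ 2
        + 4 * (6*a₂*L^2) * (Yf ξ) ^ 3) * (L * ((Yf ξ) ^ 2 - Yf ξ)) = U3 ξ := by
      simp only [hU3]; ring
    exact he ▸ h
  have hD3 : ∀ ξ : ℝ, HasDerivAt U3 (U4 ξ) ξ := by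
    intro ξ
    have h := (bbm_hd_p5 (-(a₁*L^3)) (7*a₁*L^3 - 8*a₂*L^3) (38*a₂*L^3 - 12*a₁*L^3)
      (6*a₁*L^3 - 54*a₂*L^3) (24*a₂*L^3) (Yf ξ)).comp ξ (hYd ξ)
    have he : (-(a₁*L^3) + 2 * (7*a₁*L^3 - 8*a₂*L^3) * Yf ξ + 3 * (38*a₂*L^3 - 12*a₁*L^3) * (Yf ξ) ^ 2
        + 4 * (6*a₁*L^3 - 54*a₂*L^3) * (Yf ξ) ^ 3 + 5 * (24*a₂*L^3) * (Yf ξ) ^ 4)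
        * (L * ((Yf ξ) ^ 2 - Yf ξ)) = U4 ξ := by
      simp only [hU4]; ring
    exact he ▸ h
  -- rewrite u as a traveling wave
  have hu' : u = fun z s => U0 (z - c * s ^ α / α) := by
    rw [hu]; funext z s
    simp only [hU0, hYf]
    simp only [div_eq_mul_inv, ← inv_pow]
  -- generic x- and t-derivatives of composites
  have hDxU : ∀ (g g' : ℝ → ℝ), (∀ ξ, HasDerivAt g (g' ξ) ξ) →
      ∀ (k z : ℝ), HasDerivAt (fun w => g (w - k)) (g' (z - k)) z := by
    intro g g' hg k z
    exact ((hg (z - k)).comp z ((hasDerivAt_id z).sub_const k)).congr_deriv (mul_one _)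
  have hDtU : ∀ (g g' : ℝ → ℝ), (∀ ξ, HasDerivAt g (g' ξ) ξ) →
      ∀ (z s : ℝ), 0 < s → HasDerivAt (fun s : ℝ => g (z - c * s ^ α / α))
        (g' (z - c * s ^ α / α) * -(c * s ^ (α - 1))) s := by
    intro g g' hg z s hs
    have h0 : HasDerivAt (fun s : ℝ => s ^ α) (α * s ^ (α - 1)) s :=
      Real.hasDerivAt_rpow_const (Or.inl hs.ne')
    have h1 := ((h0.const_mul c).div_const α).const_sub z
    have he : -(c * (α * s ^ (α - 1)) / α) = -(c * s ^ (α - 1)) := by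
      field_simp
    exact (hg _).comp s (he ▸ h1)
  have hpow : ∀ s : ℝ, 0 < s → s ^ (1 - α) * s ^ (α - 1) = 1 := by
    intro s hs
    rw [← Real.rpow_add hs]
    norm_num
  -- x-derivative rewriting lemmas
  have hderivx0 : ∀ (k z : ℝ), deriv (fun w => U0 (w - k)) z = U1 (z - k) :=
    fun k z => (hDxU U0 U1 hD0 k z).deriv
  have hderivx1 : ∀ (k z : ℝ), deriv (fun w => U1 (w - k)) z = U2 (z - k) :=
    fun k z => (hDxU U1 U2 hD1 k z).deriv
  -- conformable double time derivative
  have hconf : ∀ (g g' g'' : ℝ → ℝ), (∀ ξ, HasDerivAt g (g' ξ) ξ) →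
      (∀ ξ, HasDerivAt g' (g'' ξ) ξ) →
      t ^ (1 - α) * deriv (fun s => s ^ (1 - α) *
        deriv (fun r => g (x - c * r ^ α / α)) s) t = c ^ 2 * g'' (x - c * t ^ α / α) := by
    intro g g' g'' hg hg'
    have hev : (fun s => s ^ (1 - α) * deriv (fun r => g (x - c * r ^ α / α)) s)
        =ᶠ[nhds t] (fun s => -c * g' (x - c * s ^ α / α)) := by
      filter_upwards [Ioi_mem_nhds ht] with s hs
      rw [(hDtU g g' hg x s hs).deriv]
      have h2 : s ^ (1 - α) * (g' (x - c * s ^ α / α) * -(c * s ^ (α - 1)))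
          = -c * g' (x - c * s ^ α / α) * (s ^ (1 - α) * s ^ (α - 1)) := by ring
      rw [h2, hpow s hs, mul_one]
    rw [hev.deriv_eq, ((hDtU g' g'' hg' x t ht).const_mul (-c)).deriv]
    have h3 : t ^ (1 - α) * (-c * (g'' (x - c * t ^ α / α) * -(c * t ^ (α - 1))))
        = c ^ 2 * g'' (x - c * t ^ α / α) * (t ^ (1 - α) * t ^ (α - 1)) := by ring
    rw [h3, hpow t ht, mul_one]
  -- rewrite the goal
  simp only [hu']
  simp only [hderivx0, hderivx1]
  rw [hconf U0 U1 U2 hD0 hD1, hconf U2 U3 U4 hD2 hD3,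
    (hDtU U1 U2 hD1 x t ht).deriv, (hDtU U0 U1 hD0 x t ht).deriv]
  have hpq := hpow t ht
  have e3 : t ^ (1 - α) * (U2 (x - c * t ^ α / α) * -(c * t ^ (α - 1)))
      = -c * U2 (x - c * t ^ α / α) := by
    have h2 : t ^ (1 - α) * (U2 (x - c * t ^ α / α) * -(c * t ^ (α - 1)))
        = -c * U2 (x - c * t ^ α / α) * (t ^ (1 - α) * t ^ (α - 1)) := by ring
    rw [h2, hpq, mul_one]
  have e4 : t ^ (1 - α) * (U1 (x - c * t ^ α / α) * -(c * t ^ (α - 1)))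
      = -c * U1 (x - c * t ^ α / α) := by
    have h2 : t ^ (1 - α) * (U1 (x - c * t ^ α / α) * -(c * t ^ (α - 1)))
        = -c * U1 (x - c * t ^ α / α) * (t ^ (1 - α) * t ^ (α - 1)) := by ring
    rw [h2, hpq, mul_one]
  rw [e3, e4]
  simp only [hU0, hU1, hU2, hU4]
  rw [ha₀, ha₁, ha₂]
  field_simp
  ring
end

section
/- Let A > 0, A ≠ 1, d ≠ 0, and let c, ε, δ, K, a₀, a₁, a₂ be real constants satisfying the algebraic system: (ε/2)a₂² + 6δca₂(ln A)² = 0; 2δca₁(ln A)² − 10δca₂(ln A)² + εa₁a₂ = 0; (ε/2)a₁² + εa₀a₂ − 3δca₁(ln A)² + 4δca₂(ln A)² − ca₂ = 0; −ca₁ + εa₀a₁ + δca₁(ln A)² = 0; (ε/2)a₀² − K − ca₀ = 0. Then U(ξ) = a₀ + a₁Q(ξ) + a₂Q(ξ)², with Q(ξ) = 1/(1 + dA^ξ), satisfies the reduced EW equation −cU + (ε/2)U² + δc·U″ = K at every ξ with 1 + dA^ξ ≠ 0. -/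
/-- If the coefficients `a₀, a₁, a₂` and `c` satisfy the algebraic system obtained by the
modified Kudryashov method for the equal width (EW) equation, then
`U ξ = a₀ + a₁ Q ξ + a₂ (Q ξ)²` with `Q ξ = 1/(1 + d A^ξ)` satisfies the reduced
(once-integrated traveling-wave) EW equation `-c U + (ε/2) U² + δ c U'' = K`
at every `ξ` with `1 + d A^ξ ≠ 0`. -/
theorem ew_kudryashov_solution (A d c ε δ K a₀ a₁ a₂ : ℝ)
    (hA : 0 < A) (hA1 : A ≠ 1) (hd : d ≠ 0)
    (h1 : ε / 2 * a₂ ^ 2 + 6 * δ * c * a₂ * (Real.log A) ^ 2 = 0)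
    (h2 : 2 * δ * c * a₁ * (Real.log A) ^ 2 - 10 * δ * c * a₂ * (Real.log A) ^ 2
        + ε * a₁ * a₂ = 0)
    (h3 : ε / 2 * a₁ ^ 2 + ε * a₀ * a₂ - 3 * δ * c * a₁ * (Real.log A) ^ 2
        + 4 * δ * c * a₂ * (Real.log A) ^ 2 - c * a₂ = 0)
    (h4 : -(c * a₁) + ε * a₀ * a₁ + δ * c * a₁ * (Real.log A) ^ 2 = 0)
    (h5 : ε / 2 * a₀ ^ 2 - K - c * a₀ = 0)
    (U : ℝ → ℝ)
    (hUdef : U = fun ξ : ℝ =>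
      a₀ + a₁ * (1 / (1 + d * A ^ ξ)) + a₂ * (1 / (1 + d * A ^ ξ)) ^ 2) :
    ∀ ξ : ℝ, 1 + d * A ^ ξ ≠ 0 →
      -c * U ξ + ε / 2 * (U ξ) ^ 2 + δ * c * deriv (deriv U) ξ = K := by
  set L := Real.log A with hL
  set f : ℝ → ℝ := fun ξ => (1 + d * A ^ ξ)⁻¹ with hf
  set F1 : ℝ → ℝ := fun ξ => L * (a₁ + 2 * a₂ * f ξ) * ((f ξ) ^ 2 - f ξ) with hF1
  -- derivative of f on the good set
  have hfd : ∀ x : ℝ, 1 + d * A ^ x ≠ 0 →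
      HasDerivAt f (L * ((f x) ^ 2 - f x)) x := by
    intro x hx
    have hg : HasDerivAt (fun ξ : ℝ => 1 + d * A ^ ξ) (d * (A ^ x * L)) x := by
      have := (Real.hasStrictDerivAt_const_rpow hA x).hasDerivAt
      exact (this.const_mul d).const_add 1
    have : HasDerivAt (fun y : ℝ => (1 + d * A ^ y)⁻¹) (-(d * (A ^ x * L)) / (1 + d * A ^ x) ^ 2) x := hg.inv hx
    convert this using 1
    simp only [hf]
    field_simp
    ring
  have hopen : IsOpen {x : ℝ | 1 + d * A ^ x ≠ 0} := by
    have hc : Continuous fun x : ℝ => 1 + d * A ^ x := by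
      have : Continuous fun x : ℝ => A ^ x := by
        have := Real.continuous_exp.comp (continuous_const.mul continuous_id : Continuous fun x : ℝ => Real.log A * x)
        refine this.congr fun x => ?_
        simp [Real.rpow_def_of_pos hA, mul_comm]
      exact continuous_const.add (continuous_const.mul this)
    exact isOpen_compl_singleton.preimage hc
  -- derivative of U on the good set
  have hUd : ∀ x : ℝ, 1 + d * A ^ x ≠ 0 → HasDerivAt U (F1 x) x := by
    intro x hx
    have hfx := hfd x hx
    have : HasDerivAt (fun ξ => a₀ + a₁ * f ξ + a₂ * (f ξ) ^ 2)
        (a₁ * (L * ((f x) ^ 2 - f x)) + a₂ * (2 * f x * (L * ((f x) ^ 2 - f x)))) x := by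
      exact (((hfx.const_mul a₁).const_add a₀).add
        ((hfx.pow 2).const_mul a₂ |>.congr_deriv (by ring)))
    have hUeq : U = fun ξ => a₀ + a₁ * f ξ + a₂ * (f ξ) ^ 2 := by
      rw [hUdef]; funext ξ; simp [hf, one_div]
    rw [hUeq]
    convert this using 1
    simp only [hF1]; ring
  intro ξ hξ
  have hfξ := hfd ξ hξ
  -- deriv U = F1 near ξ
  have hnhds : ∀ᶠ x in nhds ξ, 1 + d * A ^ x ≠ 0 := hopen.mem_nhds hξ
  have hEq : deriv U =ᶠ[nhds ξ] F1 := by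
    filter_upwards [hnhds] with x hx using (hUd x hx).deriv
  -- derivative of F1 at ξ
  have hF1d : HasDerivAt F1
      ((L * (2 * a₂ * (L * ((f ξ) ^ 2 - f ξ))) * ((f ξ) ^ 2 - f ξ)
        + L * (a₁ + 2 * a₂ * f ξ) * (2 * f ξ * (L * ((f ξ) ^ 2 - f ξ)) - L * ((f ξ) ^ 2 - f ξ)))) ξ := by
    have hA' : HasDerivAt (fun x => L * (a₁ + 2 * a₂ * f x))
        (L * (2 * a₂ * (L * ((f ξ) ^ 2 - f ξ)))) ξ :=
      ((hfξ.const_mul (2 * a₂)).const_add a₁).const_mul L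
    have hB' : HasDerivAt (fun x => (f x) ^ 2 - f x)
        (2 * f ξ * (L * ((f ξ) ^ 2 - f ξ)) - L * ((f ξ) ^ 2 - f ξ)) ξ :=
      ((hfξ.pow 2).congr_deriv (by ring)).sub hfξ
    exact hA'.mul hB'
  have hderiv2 : deriv (deriv U) ξ
      = (L * (2 * a₂ * (L * ((f ξ) ^ 2 - f ξ))) * ((f ξ) ^ 2 - f ξ)
        + L * (a₁ + 2 * a₂ * f ξ) * (2 * f ξ * (L * ((f ξ) ^ 2 - f ξ)) - L * ((f ξ) ^ 2 - f ξ))) := by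
    rw [hEq.deriv_eq]; exact hF1d.deriv
  rw [hderiv2, hUdef]
  simp only [one_div, hf]
  have hQ : (1 + d * A ^ ξ) * (1 + d * A ^ ξ)⁻¹ = 1 := mul_inv_cancel₀ hξ
  set q : ℝ := (1 + d * A ^ ξ)⁻¹
  linear_combination h5 + q * h4 + q ^ 2 * h3 + q ^ 3 * h2 + q ^ 4 * h1
end

section
/- Let A > 0, A ≠ 1, d ≠ 0, and let ε, δ, K be real constants with ε ≠ 0, −1 + δ²(ln A)⁴ ≠ 0, and Kε/(−1 + δ²(ln A)⁴) > 0. Set D = √(Kε/(−1 + δ²(ln A)⁴)) and define c = √2·D, a₀ = −√2·D·(−1 + δ(ln A)²)/ε, a₁ = 12Kδ(ln A)²√2/(D·(−1 + δ²(ln A)⁴)), a₂ = −12δ√2·D·(ln A)²/ε. Then U(ξ) = a₀ + a₁Q(ξ) + a₂Q(ξ)², with Q(ξ) = 1/(1 + dA^ξ), satisfies −cU + (ε/2)U² + δc·U″ = K at every ξ with 1 + dA^ξ ≠ 0. -/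
set_option maxHeartbeats 2000000


/-- The first explicit Kudryashov solution of the reduced EW equation: with
`D = √(Kε/(-1 + δ²(log A)⁴))`, `c = √2 D` and the coefficients `a₀, a₁, a₂` as stated,
the function `U ξ = a₀ + a₁ Q ξ + a₂ (Q ξ)²` with `Q ξ = 1/(1 + d A^ξ)` satisfies
`-c U + (ε/2) U² + δ c U'' = K` at every `ξ` with `1 + d A^ξ ≠ 0`. -/
theorem ew_explicit_solution_one (A d ε δ K D c a₀ a₁ a₂ : ℝ)
    (hA : 0 < A) (hA1 : A ≠ 1) (hd : d ≠ 0) (hε : ε ≠ 0)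
    (hden : -1 + δ ^ 2 * (Real.log A) ^ 4 ≠ 0)
    (hpos : 0 < K * ε / (-1 + δ ^ 2 * (Real.log A) ^ 4))
    (hD : D = Real.sqrt (K * ε / (-1 + δ ^ 2 * (Real.log A) ^ 4)))
    (hc : c = Real.sqrt 2 * D)
    (ha₀ : a₀ = -(Real.sqrt 2 * D * (-1 + δ * (Real.log A) ^ 2) / ε))
    (ha₁ : a₁ = 12 * K * δ * (Real.log A) ^ 2 * Real.sqrt 2
        / (D * (-1 + δ ^ 2 * (Real.log A) ^ 4)))
    (ha₂ : a₂ = -(12 * δ * Real.sqrt 2 * D * (Real.log A) ^ 2 / ε))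
    (U : ℝ → ℝ)
    (hUdef : U = fun ξ : ℝ =>
      a₀ + a₁ * (1 / (1 + d * A ^ ξ)) + a₂ * (1 / (1 + d * A ^ ξ)) ^ 2) :
    ∀ ξ : ℝ, 1 + d * A ^ ξ ≠ 0 →
      -c * U ξ + ε / 2 * (U ξ) ^ 2 + δ * c * deriv (deriv U) ξ = K := by
  set L := Real.log A with hL
  -- basic facts
  have hrpow : ∀ ξ : ℝ, A ^ ξ = Real.exp (L * ξ) := fun ξ =>
    Real.rpow_def_of_pos hA ξ
  set q : ℝ → ℝ := fun x => (1 + d * Real.exp (L * x))⁻¹ with hqdef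
  have hU' : U = fun ξ => a₀ + a₁ * q ξ + a₂ * (q ξ) ^ 2 := by
    rw [hUdef]; funext ξ; simp [hqdef, hrpow ξ, one_div]
  -- derivative of f
  have hf : ∀ x : ℝ, HasDerivAt (fun y => 1 + d * Real.exp (L * y))
      (d * (Real.exp (L * x) * L)) x := by
    intro x
    have h1 : HasDerivAt (fun y : ℝ => L * y) L x := by
      simpa using (hasDerivAt_id x).const_mul L
    have h2 : HasDerivAt (fun y : ℝ => Real.exp (L * y))
        (Real.exp (L * x) * L) x := (Real.hasDerivAt_exp (L * x)).comp x h1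
    simpa using (h2.const_mul d).const_add 1
  have hQ : ∀ x : ℝ, (1 + d * Real.exp (L * x)) ≠ 0 →
      HasDerivAt q (-L * q x * (1 - q x)) x := by
    intro x hx
    have h := (hf x).inv hx
    refine h.congr_deriv ?_
    simp only [hqdef]
    field_simp
    ring
  have hUderiv : ∀ x : ℝ, (1 + d * Real.exp (L * x)) ≠ 0 →
      HasDerivAt U
        (a₁ * (-L * q x * (1 - q x)) + a₂ * (2 * q x * (-L * q x * (1 - q x)))) x := by
    intro x hx
    rw [hU']
    have hq := hQ x hx
    have h := ((hq.const_mul a₁).const_add a₀).add ((hq.pow 2).const_mul a₂)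
    refine h.congr_deriv ?_
    ring
  intro ξ hξ
  have hfξ : (1 + d * Real.exp (L * ξ)) ≠ 0 := by rwa [← hrpow ξ]
  -- the open set
  have hopen : IsOpen {x : ℝ | (1 + d * Real.exp (L * x)) ≠ 0} := by
    have hcont : Continuous fun x : ℝ => 1 + d * Real.exp (L * x) := by
      continuity
    exact isOpen_ne.preimage hcont
  have hmem : {x : ℝ | (1 + d * Real.exp (L * x)) ≠ 0} ∈ nhds ξ :=
    hopen.mem_nhds hfξ
  have hev : deriv U =ᶠ[nhds ξ] (fun x =>
      a₁ * (-L * q x * (1 - q x)) + a₂ * (2 * q x * (-L * q x * (1 - q x)))) := by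
    filter_upwards [hmem] with x hx
    exact (hUderiv x hx).deriv
  have hdd : deriv (deriv U) ξ = deriv (fun x =>
      a₁ * (-L * q x * (1 - q x)) + a₂ * (2 * q x * (-L * q x * (1 - q x)))) ξ :=
    hev.deriv_eq
  -- second derivative
  have hq := hQ ξ hfξ
  have h1 : HasDerivAt (fun x => -L * q x) (-L * (-L * q ξ * (1 - q ξ))) ξ :=
    hq.const_mul (-L)
  have h2 : HasDerivAt (fun x => 1 - q x) (-(-L * q ξ * (1 - q ξ))) ξ :=
    hq.const_sub 1
  have h3 := h1.mul h2
  have h5 := (hq.const_mul 2).mul h3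
  have hV : HasDerivAt (fun x =>
      a₁ * (-L * q x * (1 - q x)) + a₂ * (2 * q x * (-L * q x * (1 - q x))))
      (a₁ * (-L * (-L * q ξ * (1 - q ξ)) * (1 - q ξ) +
          -L * q ξ * -(-L * q ξ * (1 - q ξ))) +
        a₂ * (2 * (-L * q ξ * (1 - q ξ)) * (-L * q ξ * (1 - q ξ)) +
          2 * q ξ * (-L * (-L * q ξ * (1 - q ξ)) * (1 - q ξ) +
            -L * q ξ * -(-L * q ξ * (1 - q ξ))))) ξ :=
    (h3.const_mul a₁).add (h5.const_mul a₂)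
  have hderivV := hV.deriv
  set y := q ξ with hy
  set Q' := -L * y * (1 - y) with hQ'
  -- key algebraic facts
  have hs2 : Real.sqrt 2 ^ 2 = 2 := Real.sq_sqrt (by norm_num)
  have hD2 : D ^ 2 = K * ε / (-1 + δ ^ 2 * L ^ 4) := by
    rw [hD]; exact Real.sq_sqrt hpos.le
  have hDne : D ≠ 0 := by
    rw [hD]; exact (Real.sqrt_pos.mpr hpos).ne'
  have hcne : c ≠ 0 := by
    rw [hc]
    exact mul_ne_zero (by positivity) hDne
  have hK : K = c ^ 2 * (-1 + δ ^ 2 * L ^ 4) / (2 * ε) := by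
    have : c ^ 2 = 2 * (K * ε / (-1 + δ ^ 2 * L ^ 4)) := by
      rw [hc, mul_pow, hs2, hD2]
    field_simp at this ⊢
    linarith
  have hK' : K = D ^ 2 * (-1 + δ ^ 2 * L ^ 4) / ε := by
    rw [hD2]; field_simp
  have ha₁' : a₁ = 12 * δ * L ^ 2 * c / ε := by
    rw [ha₁, hK', hc]; field_simp
  have ha₂' : a₂ = -(12 * δ * L ^ 2 * c / ε) := by
    rw [ha₂, hc]; ring
  have ha₀' : a₀ = -(c * (-1 + δ * L ^ 2) / ε) := by
    rw [ha₀, hc]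
  rw [hdd, hderivV]
  simp only [hU']
  rw [hK, ha₀', ha₁', ha₂', hQ']
  rw [show q ξ = y from hy.symm]
  field_simp
  ring
end

section
/- Let A > 0, A ≠ 1, d ≠ 0, and let ε, δ, K be real constants with ε ≠ 0, −1 + δ²(ln A)⁴ ≠ 0, and Kε/(−1 + δ²(ln A)⁴) > 0. Set D = √(Kε/(−1 + δ²(ln A)⁴)) and define c = −√2·D, a₀ = √2·D·(−1 + δ(ln A)²)/ε, a₁ = −12Kδ(ln A)²√2/(D·(−1 + δ²(ln A)⁴)), a₂ = 12δ√2·D·(ln A)²/ε. Then U(ξ) = a₀ + a₁Q(ξ) + a₂Q(ξ)², with Q(ξ) = 1/(1 + dA^ξ), satisfies −cU + (ε/2)U² + δc·U″ = K at every ξ with 1 + dA^ξ ≠ 0. -/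
/-!
`Q = 1/(1 + d A^ξ)` solves the logistic Riccati equation `Q' = (ln A)(Q² - Q)`, so
`w = Q² - Q` satisfies the autonomous equation `w'' = (ln A)² w (6w + 1)`. Since `a₁ = -a₂`,
the ansatz is `U = a₀ + a₂ w`, and the reduced EW equation becomes a quadratic polynomial
identity in `w`; its three coefficients vanish exactly by the choice of `c`, `a₀` and `a₂`.
-/

open Filter Topology

noncomputable section

def kudryashovQ (A d ξ : ℝ) : ℝ := (1 + d * A ^ ξ)⁻¹

theorem hasDerivAt_one_add_mul_rpow {A : ℝ} (hA : 0 < A) (d ξ : ℝ) :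
    HasDerivAt (fun y => 1 + d * A ^ y) (d * (A ^ ξ * Real.log A)) ξ :=
  ((Real.hasStrictDerivAt_const_rpow hA ξ).hasDerivAt.const_mul d).const_add 1

theorem hasDerivAt_kudryashovQ {A : ℝ} (hA : 0 < A) (d : ℝ) {ξ : ℝ} (hξ : 1 + d * A ^ ξ ≠ 0) :
    HasDerivAt (kudryashovQ A d)
      (Real.log A * (kudryashovQ A d ξ ^ 2 - kudryashovQ A d ξ)) ξ := by
  refine ((hasDerivAt_one_add_mul_rpow hA d ξ).fun_inv hξ).congr_deriv ?_
  simp only [kudryashovQ]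
  field_simp
  ring

theorem eventually_hasDerivAt_kudryashovQ {A : ℝ} (hA : 0 < A) (d : ℝ) {ξ : ℝ}
    (hξ : 1 + d * A ^ ξ ≠ 0) :
    ∀ᶠ y in 𝓝 ξ, HasDerivAt (kudryashovQ A d)
      (Real.log A * (kudryashovQ A d y ^ 2 - kudryashovQ A d y)) y := by
  filter_upwards [(hasDerivAt_one_add_mul_rpow hA d ξ).continuousAt.eventually_ne hξ] with y hy
    using hasDerivAt_kudryashovQ hA d hy

theorem deriv_deriv_sq_sub_of_riccati {f : ℝ → ℝ} {L x : ℝ}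
    (hf : ∀ᶠ y in 𝓝 x, HasDerivAt f (L * (f y ^ 2 - f y)) y) :
    deriv (deriv fun y => f y ^ 2 - f y) x
      = L ^ 2 * (f x ^ 2 - f x) * (6 * (f x ^ 2 - f x) + 1) := by
  have hw : ∀ᶠ y in 𝓝 x, HasDerivAt (fun y => f y ^ 2 - f y)
      (L * (2 * f y - 1) * (f y ^ 2 - f y)) y := by
    filter_upwards [hf] with y hy
    refine ((hy.fun_pow 2).fun_sub hy).congr_deriv ?_
    push_cast
    ring
  have hfx := hf.self_of_nhds
  have hw' : HasDerivAt (fun y => L * (2 * f y - 1) * (f y ^ 2 - f y))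
      (L * (2 * (L * (f x ^ 2 - f x))) * (f x ^ 2 - f x)
        + L * (2 * f x - 1) * (L * (2 * f x - 1) * (f x ^ 2 - f x))) x :=
    ((((hfx.const_mul 2).sub_const 1).const_mul L).mul hw.self_of_nhds)
  have hderiv : deriv (fun y => f y ^ 2 - f y) =ᶠ[𝓝 x]
      fun y => L * (2 * f y - 1) * (f y ^ 2 - f y) :=
    hw.mono fun y hy => hy.deriv
  rw [hderiv.deriv_eq, hw'.deriv]
  ring

theorem reduced_ew_of_ansatz_coeffs {ε δ K L c a₀ a₂ : ℝ} (hε : ε ≠ 0)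
    (ha₂ : ε * a₂ = -12 * δ * c * L ^ 2) (ha₀ : ε * a₀ = c * (1 - δ * L ^ 2))
    (hc : c ^ 2 * (-1 + δ ^ 2 * L ^ 4) = 2 * K * ε) (w : ℝ) :
    -c * (a₀ + a₂ * w) + ε / 2 * (a₀ + a₂ * w) ^ 2 + δ * c * (a₂ * (L ^ 2 * w * (6 * w + 1)))
      = K := by
  have ha₂' : a₂ = -12 * δ * c * L ^ 2 / ε := by field_simp; linarith
  have ha₀' : a₀ = c * (1 - δ * L ^ 2) / ε := by field_simp; linarith
  subst ha₂' ha₀'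
  field_simp
  linear_combination hc

theorem ew_explicit_solution_two_general (A d ε δ K D c a₀ a₁ a₂ : ℝ)
    (hA : 0 < A) (hε : ε ≠ 0)
    (hden : -1 + δ ^ 2 * (Real.log A) ^ 4 ≠ 0)
    (hpos : 0 < K * ε / (-1 + δ ^ 2 * (Real.log A) ^ 4))
    (hD : D = Real.sqrt (K * ε / (-1 + δ ^ 2 * (Real.log A) ^ 4)))
    (hc : c = -(Real.sqrt 2 * D))
    (ha₀ : a₀ = Real.sqrt 2 * D * (-1 + δ * (Real.log A) ^ 2) / ε)
    (ha₁ : a₁ = -(12 * K * δ * (Real.log A) ^ 2 * Real.sqrt 2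
        / (D * (-1 + δ ^ 2 * (Real.log A) ^ 4))))
    (ha₂ : a₂ = 12 * δ * Real.sqrt 2 * D * (Real.log A) ^ 2 / ε)
    (U : ℝ → ℝ)
    (hUdef : U = fun ξ : ℝ =>
      a₀ + a₁ * (1 / (1 + d * A ^ ξ)) + a₂ * (1 / (1 + d * A ^ ξ)) ^ 2) :
    ∀ ξ : ℝ, 1 + d * A ^ ξ ≠ 0 →
      -c * U ξ + ε / 2 * (U ξ) ^ 2 + δ * c * deriv (deriv U) ξ = K := by
  intro ξ hξ
  set L := Real.log A
  set Q := kudryashovQ A d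
  have hD2 : D ^ 2 * (-1 + δ ^ 2 * L ^ 4) = K * ε := by
    rw [hD, Real.sq_sqrt hpos.le]; field_simp
  have hDne : D ≠ 0 := by rw [hD]; exact (Real.sqrt_pos.mpr hpos).ne'
  have ha₁_eq : a₁ = -a₂ := by
    rw [ha₁, ha₂]; field_simp; linear_combination (δ * L ^ 2) * hD2
  have hU : U = fun y => a₀ + a₂ * (Q y ^ 2 - Q y) := by
    rw [hUdef, ha₁_eq]; ext y; simp only [Q, kudryashovQ, one_div]; ring
  have hU'' : deriv (deriv U) ξ = a₂ * (L ^ 2 * (Q ξ ^ 2 - Q ξ) * (6 * (Q ξ ^ 2 - Q ξ) + 1)) := by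
    rw [hU, deriv_const_add', deriv_const_mul_field', deriv_const_mul_field']
    exact congrArg (a₂ * ·)
      (deriv_deriv_sq_sub_of_riccati (eventually_hasDerivAt_kudryashovQ hA d hξ))
  have hs2 : Real.sqrt 2 ^ 2 = 2 := Real.sq_sqrt zero_le_two
  rw [hU'', hU]
  refine reduced_ew_of_ansatz_coeffs hε ?_ ?_ ?_ _
  · rw [ha₂, hc]; field_simp
  · rw [ha₀, hc]; field_simp; ring
  · rw [hc, neg_sq, mul_pow, hs2]; linear_combination 2 * hD2

/-- The second explicit Kudryashov solution of the reduced EW equation: with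
`D = √(Kε/(-1 + δ²(log A)⁴))`, `c = -√2 D` and the coefficients `a₀, a₁, a₂` as stated,
the function `U ξ = a₀ + a₁ Q ξ + a₂ (Q ξ)²` with `Q ξ = 1/(1 + d A^ξ)` satisfies
`-c U + (ε/2) U² + δ c U'' = K` at every `ξ` with `1 + d A^ξ ≠ 0`. -/
theorem ew_explicit_solution_two (A d ε δ K D c a₀ a₁ a₂ : ℝ)
    (hA : 0 < A) (hA1 : A ≠ 1) (hd : d ≠ 0) (hε : ε ≠ 0)
    (hden : -1 + δ ^ 2 * (Real.log A) ^ 4 ≠ 0)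
    (hpos : 0 < K * ε / (-1 + δ ^ 2 * (Real.log A) ^ 4))
    (hD : D = Real.sqrt (K * ε / (-1 + δ ^ 2 * (Real.log A) ^ 4)))
    (hc : c = -(Real.sqrt 2 * D))
    (ha₀ : a₀ = Real.sqrt 2 * D * (-1 + δ * (Real.log A) ^ 2) / ε)
    (ha₁ : a₁ = -(12 * K * δ * (Real.log A) ^ 2 * Real.sqrt 2
        / (D * (-1 + δ ^ 2 * (Real.log A) ^ 4))))
    (ha₂ : a₂ = 12 * δ * Real.sqrt 2 * D * (Real.log A) ^ 2 / ε)
    (U : ℝ → ℝ)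
    (hUdef : U = fun ξ : ℝ =>
      a₀ + a₁ * (1 / (1 + d * A ^ ξ)) + a₂ * (1 / (1 + d * A ^ ξ)) ^ 2) :
    ∀ ξ : ℝ, 1 + d * A ^ ξ ≠ 0 →
      -c * U ξ + ε / 2 * (U ξ) ^ 2 + δ * c * deriv (deriv U) ξ = K :=
  ew_explicit_solution_two_general A d ε δ K D c a₀ a₁ a₂ hA hε hden hpos hD hc ha₀ ha₁ ha₂ U hUdef
end
end

section
/- Let α ∈ (0,1], A > 0, A ≠ 1, d > 0, and let c, ε, β, μ, K, a₀, a₁, a₂ be real constants satisfying the algebraic system: −6cμa₂(ln A)² + (β/2)a₂² = 0; −2cμa₁(ln A)² + βa₁a₂ + 10cμa₂(ln A)² = 0; βa₀a₂ − ca₂ + εa₂ + 3cμa₁(ln A)² − 4cμa₂(ln A)² + (β/2)a₁² = 0; βa₀a₁ + εa₁ − ca₁ − cμa₁(ln A)² = 0; εa₀ + (β/2)a₀² − ca₀ − K = 0. Define u(x,t) = a₀ + a₁/(1 + dA^{x − c t^α/α}) + a₂/(1 + dA^{x − c t^α/α})². Then for all x ∈ ℝ and t > 0, u satisfies the conformable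 time-fractional BBM equation: t^{1−α}∂_t u + ε·∂_x u + β·u·∂_x u + μ·t^{1−α}·∂_t(∂_x² u) = 0. -/
noncomputable def bbmQ (L d w : ℝ) : ℝ := (1 + d * Real.exp (L * w))⁻¹

lemma bbmQ_hasDerivAt (L d : ℝ) (hd : 0 < d) (w : ℝ) :
    HasDerivAt (fun w => bbmQ L d w) (-L * (bbmQ L d w - bbmQ L d w ^ 2)) w := by
  have hpos : (0:ℝ) < 1 + d * Real.exp (L * w) := by positivity
  have h1 : HasDerivAt (fun w : ℝ => L * w) L w := by
    simpa using (hasDerivAt_id w).const_mul L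
  have h2 : HasDerivAt (fun w : ℝ => Real.exp (L * w)) (Real.exp (L * w) * L) w :=
    (Real.hasDerivAt_exp (L * w)).comp w h1
  have h3 : HasDerivAt (fun w : ℝ => 1 + d * Real.exp (L * w))
      (d * (Real.exp (L * w) * L)) w := (h2.const_mul d).const_add 1
  have h4 := h3.inv hpos.ne'
  have hval : -L * (bbmQ L d w - bbmQ L d w ^ 2)
      = -(d * (Real.exp (L * w) * L)) / (1 + d * Real.exp (L * w)) ^ 2 := by
    unfold bbmQ
    field_simp
    ring
  rw [hval]
  exact h4

noncomputable def bbmV (L d a₀ a₁ a₂ w : ℝ) : ℝ :=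
  a₀ + a₁ * bbmQ L d w + a₂ * bbmQ L d w ^ 2

noncomputable def bbmF1 (L d a₁ a₂ w : ℝ) : ℝ :=
  -L * ((bbmQ L d w - bbmQ L d w ^ 2) * (a₁ + 2 * a₂ * bbmQ L d w))

noncomputable def bbmF2 (L d a₁ a₂ w : ℝ) : ℝ :=
  L ^ 2 * ((bbmQ L d w - bbmQ L d w ^ 2) *
    (a₁ + (4 * a₂ - 2 * a₁) * bbmQ L d w - 6 * a₂ * bbmQ L d w ^ 2))

noncomputable def bbmF3 (L d a₁ a₂ w : ℝ) : ℝ :=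
  -L ^ 3 * ((bbmQ L d w - bbmQ L d w ^ 2) *
    (a₁ + (8 * a₂ - 6 * a₁) * bbmQ L d w + (6 * a₁ - 30 * a₂) * bbmQ L d w ^ 2
      + 24 * a₂ * bbmQ L d w ^ 3))

lemma bbmV_hasDerivAt (L d a₀ a₁ a₂ : ℝ) (hd : 0 < d) (w : ℝ) :
    HasDerivAt (fun w => bbmV L d a₀ a₁ a₂ w) (bbmF1 L d a₁ a₂ w) w := by
  have hQ := bbmQ_hasDerivAt L d hd w
  have h := ((hQ.const_mul a₁).const_add a₀).add ((hQ.pow 2).const_mul a₂)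
  have hval : bbmF1 L d a₁ a₂ w
      = a₁ * (-L * (bbmQ L d w - bbmQ L d w ^ 2))
        + a₂ * ((2 : ℕ) * bbmQ L d w ^ (2 - 1) * (-L * (bbmQ L d w - bbmQ L d w ^ 2))) := by
    unfold bbmF1; push_cast; ring
  unfold bbmV
  rw [hval]
  exact h

lemma bbmF1_hasDerivAt (L d a₁ a₂ : ℝ) (hd : 0 < d) (w : ℝ) :
    HasDerivAt (fun w => bbmF1 L d a₁ a₂ w) (bbmF2 L d a₁ a₂ w) w := by
  have hQ := bbmQ_hasDerivAt L d hd w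
  have h := ((hQ.sub (hQ.pow 2)).mul ((hQ.const_mul (2 * a₂)).const_add a₁)).const_mul (-L)
  have hval : bbmF2 L d a₁ a₂ w
      = -L * ((-L * (bbmQ L d w - bbmQ L d w ^ 2)
            - (2 : ℕ) * bbmQ L d w ^ (2 - 1) * (-L * (bbmQ L d w - bbmQ L d w ^ 2)))
          * (a₁ + 2 * a₂ * bbmQ L d w)
        + (bbmQ L d w - bbmQ L d w ^ 2) * (2 * a₂ * (-L * (bbmQ L d w - bbmQ L d w ^ 2)))) := by
    unfold bbmF2; push_cast; ring
  unfold bbmF1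
  rw [hval]
  exact h

lemma bbmF2_hasDerivAt (L d a₁ a₂ : ℝ) (hd : 0 < d) (w : ℝ) :
    HasDerivAt (fun w => bbmF2 L d a₁ a₂ w) (bbmF3 L d a₁ a₂ w) w := by
  have hQ := bbmQ_hasDerivAt L d hd w
  have h := ((hQ.sub (hQ.pow 2)).mul
      (((hQ.const_mul (4 * a₂ - 2 * a₁)).const_add a₁).sub
        ((hQ.pow 2).const_mul (6 * a₂)))).const_mul (L ^ 2)
  have hval : bbmF3 L d a₁ a₂ w
      = L ^ 2 * ((-L * (bbmQ L d w - bbmQ L d w ^ 2)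
            - (2 : ℕ) * bbmQ L d w ^ (2 - 1) * (-L * (bbmQ L d w - bbmQ L d w ^ 2)))
          * (a₁ + (4 * a₂ - 2 * a₁) * bbmQ L d w - 6 * a₂ * bbmQ L d w ^ 2)
        + (bbmQ L d w - bbmQ L d w ^ 2)
          * ((4 * a₂ - 2 * a₁) * (-L * (bbmQ L d w - bbmQ L d w ^ 2))
            - 6 * a₂ * ((2 : ℕ) * bbmQ L d w ^ (2 - 1)
              * (-L * (bbmQ L d w - bbmQ L d w ^ 2))))) := by
    unfold bbmF3; push_cast; ring
  unfold bbmF2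
  rw [hval]
  exact h
/-- If the coefficients `a₀, a₁, a₂` and the wave speed `c` satisfy the algebraic system
obtained by the modified Kudryashov method for the BBM equation, then the function
`u (x, t) = a₀ + a₁/(1 + d A^{x - c t^α/α}) + a₂/(1 + d A^{x - c t^α/α})²` satisfies the
conformable time-fractional BBM equation `u_t^(α) + ε u_x + β u u_x + μ u_{xxt}^(α) = 0`
(the conformable derivative of order `α` in `t` written as `t^(1-α) ∂_t`) for all `x`
and all `t > 0`. -/
theorem bbm_explicit_pde_solution (α A d c ε β μ K a₀ a₁ a₂ : ℝ)
    (hα0 : 0 < α) (hα1 : α ≤ 1) (hA : 0 < A) (hA1 : A ≠ 1) (hd : 0 < d)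
    (h1 : -6 * c * μ * a₂ * (Real.log A) ^ 2 + β / 2 * a₂ ^ 2 = 0)
    (h2 : -2 * c * μ * a₁ * (Real.log A) ^ 2 + β * a₁ * a₂
        + 10 * c * μ * a₂ * (Real.log A) ^ 2 = 0)
    (h3 : β * a₀ * a₂ - c * a₂ + ε * a₂ + 3 * c * μ * a₁ * (Real.log A) ^ 2
        - 4 * c * μ * a₂ * (Real.log A) ^ 2 + β / 2 * a₁ ^ 2 = 0)
    (h4 : β * a₀ * a₁ + ε * a₁ - c * a₁ - c * μ * a₁ * (Real.log A) ^ 2 = 0)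
    (h5 : ε * a₀ + β / 2 * a₀ ^ 2 - c * a₀ - K = 0)
    (u : ℝ → ℝ → ℝ)
    (hu : u = fun x t =>
      a₀ + a₁ / (1 + d * A ^ (x - c * t ^ α / α))
        + a₂ / (1 + d * A ^ (x - c * t ^ α / α)) ^ 2) :
    ∀ x t : ℝ, 0 < t →
      t ^ (1 - α) * deriv (fun s => u x s) t
        + ε * deriv (fun y => u y t) x
        + β * u x t * deriv (fun y => u y t) x
        + μ * (t ^ (1 - α) *
            deriv (fun s => deriv (fun y => deriv (fun z => u z s) y) x) t) = 0 := by
  intro x t ht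
  have hα : α ≠ 0 := ne_of_gt hα0
  set L : ℝ := Real.log A with hL
  -- rewrite u in terms of bbmV
  have hu' : ∀ y s : ℝ, u y s = bbmV L d a₀ a₁ a₂ (y - c * s ^ α / α) := by
    intro y s
    rw [hu]
    simp only [bbmV, bbmQ, Real.rpow_def_of_pos hA, hL]
    have hpos : (0:ℝ) < 1 + d * Real.exp (Real.log A * (y - c * s ^ α / α)) := by positivity
    field_simp
  -- t-derivative of the wave variable
  have hWt : HasDerivAt (fun s : ℝ => x - c * s ^ α / α) (-(c * t ^ (α - 1))) t := by
    have h := Real.hasDerivAt_rpow_const (x := t) (p := α) (Or.inl ht.ne')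
    have h2 := ((h.const_mul c).div_const α).const_sub x
    have hval : -(c * t ^ (α - 1)) = -(c * (α * t ^ (α - 1)) / α) := by
      field_simp
    rw [hval]
    exact h2
  have hWx : ∀ (s y : ℝ), HasDerivAt (fun z : ℝ => z - c * s ^ α / α) 1 y := by
    intro s y
    simpa using (hasDerivAt_id y).sub_const (c * s ^ α / α)
  -- first x-derivative
  have hx1 : ∀ s y : ℝ, deriv (fun z => u z s) y = bbmF1 L d a₁ a₂ (y - c * s ^ α / α) := by
    intro s y
    have hfe : (fun z => u z s) = fun z => bbmV L d a₀ a₁ a₂ (z - c * s ^ α / α) :=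
      funext fun z => hu' z s
    rw [hfe]
    have h : HasDerivAt (fun z : ℝ => bbmV L d a₀ a₁ a₂ (z - c * s ^ α / α))
        (bbmF1 L d a₁ a₂ (y - c * s ^ α / α) * 1) y := by
      have := (bbmV_hasDerivAt L d a₀ a₁ a₂ hd (y - c * s ^ α / α)).comp y (hWx s y); exact this
    simpa using h.deriv
  -- second x-derivative
  have hx2 : ∀ s : ℝ, deriv (fun y => deriv (fun z => u z s) y) x
      = bbmF2 L d a₁ a₂ (x - c * s ^ α / α) := by
    intro s
    have hfe : (fun y => deriv (fun z => u z s) y)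
        = fun y => bbmF1 L d a₁ a₂ (y - c * s ^ α / α) := funext fun y => hx1 s y
    rw [hfe]
    have h : HasDerivAt (fun y : ℝ => bbmF1 L d a₁ a₂ (y - c * s ^ α / α))
        (bbmF2 L d a₁ a₂ (x - c * s ^ α / α) * 1) x := by
      have := (bbmF1_hasDerivAt L d a₁ a₂ hd (x - c * s ^ α / α)).comp x (hWx s x); exact this
    simpa using h.deriv
  -- t-derivative of u
  have hT1 : deriv (fun s => u x s) t
      = bbmF1 L d a₁ a₂ (x - c * t ^ α / α) * -(c * t ^ (α - 1)) := by
    have hfe : (fun s => u x s) = fun s => bbmV L d a₀ a₁ a₂ (x - c * s ^ α / α) :=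
      funext fun s => hu' x s
    rw [hfe]
    exact ((bbmV_hasDerivAt L d a₀ a₁ a₂ hd (x - c * t ^ α / α)).comp t hWt).deriv
  -- t-derivative of u_xx
  have hT3 : deriv (fun s => deriv (fun y => deriv (fun z => u z s) y) x) t
      = bbmF3 L d a₁ a₂ (x - c * t ^ α / α) * -(c * t ^ (α - 1)) := by
    have hfe : (fun s => deriv (fun y => deriv (fun z => u z s) y) x)
        = fun s => bbmF2 L d a₁ a₂ (x - c * s ^ α / α) := funext hx2
    rw [hfe]
    exact ((bbmF2_hasDerivAt L d a₁ a₂ hd (x - c * t ^ α / α)).comp t hWt).deriv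
  -- collapse the conformable factor
  have hts : t ^ (1 - α) * t ^ (α - 1) = 1 := by
    rw [← Real.rpow_add ht]; norm_num
  have hc : ∀ X : ℝ, t ^ (1 - α) * (X * -(c * t ^ (α - 1))) = -(c * X) := by
    intro X
    calc t ^ (1 - α) * (X * -(c * t ^ (α - 1)))
        = t ^ (1 - α) * t ^ (α - 1) * -(c * X) := by ring
      _ = -(c * X) := by rw [hts, one_mul]
  rw [hT1, hT3, hx1 t x, hu' x t, hc, hc]
  simp only [bbmV, bbmF1, bbmF3]
  set q : ℝ := bbmQ L d (x - c * t ^ α / α) with hq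
  linear_combination (-L * (q - q ^ 2)) * h4 + (-L * (q - q ^ 2) * (2 * q)) * h3
    + (-L * (q - q ^ 2) * (3 * q ^ 2)) * h2 + (-L * (q - q ^ 2) * (4 * q ^ 3)) * h1
end
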